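/- arXiv:math/9912044 — 4 statements merged into one kernel-verified Lean document; each statement's English description precedes it below -/
import Mathlib

section
/- Let λ, λ' be nonzero complex numbers with |λ| > 1 such that λ^m (λ')^n ≠ 1 for every pair of integers (m,n) ≠ (0,0). Then the closure of the multiplicative subgroup of ℂ* generated by λ and λ' contains a one-real-parameter subgroup {exp(a r) : r ∈ ℝ} for some nonzero complex number a. -/
/-!
The logarithms `log λ`, `log λ'` and `2πi` span a subgroup `L` of `ℂ` on which `exp` takes values
in the group generated by `λ` and `λ'`. The multiplicative independence of `λ, λ'` makes these
three numbers `ℤ`-linearly independent, so `L` has rank `3 > dim_ℝ ℂ` and cannot be discrete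
(a discrete subgroup of a real vector space has `ℤ`-rank equal to the dimension of its span).
Normalizing a sequence of nonzero elements of `L` tending to `0` and passing to a convergent
subsequence gives a direction `u`, and integer multiples of those elements approximate every
point of `ℝ u`; hence `ℝ u ⊆ closure L`, and `exp` maps this line into the closure of the group.
-/

open Filter Topology

section NonDiscreteSubgroup

variable {E : Type*} [NormedAddCommGroup E]

lemma Submodule.exists_mem_ne_zero_norm_lt (L : Submodule ℤ E) (hL : ¬DiscreteTopology L)
    {ε : ℝ} (hε : 0 < ε) : ∃ x ∈ L, x ≠ 0 ∧ ‖x‖ < ε := by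
  by_contra! hsep
  refine hL (DiscreteTopology.of_forall_le_dist hε fun x y hxy ↦ ?_)
  change ε ≤ dist (x : E) y
  rw [dist_eq_norm]
  exact hsep _ (L.sub_mem x.2 y.2) (sub_ne_zero.mpr (Subtype.coe_ne_coe.mpr hxy))

variable [NormedSpace ℝ E]

lemma dist_smul_floor_zsmul_le (s : ℝ) (x : E) : dist (s • x) (⌊s⌋ • x) ≤ ‖x‖ := by
  rw [dist_eq_norm, ← Int.cast_smul_eq_zsmul ℝ, ← sub_smul, Int.self_sub_floor, norm_smul,
    Real.norm_of_nonneg (Int.fract_nonneg s)]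
  exact mul_le_of_le_one_left (norm_nonneg x) (Int.fract_lt_one s).le

lemma Submodule.smul_mem_closure_of_tendsto_normalize (L : Submodule ℤ E) {ι : Type*}
    {l : Filter ι} [l.NeBot] {x : ι → E} (hxL : ∀ i, x i ∈ L) (hx : Tendsto x l (𝓝 0))
    {u : E} (hu : Tendsto (fun i ↦ ‖x i‖⁻¹ • x i) l (𝓝 u)) (r : ℝ) :
    r • u ∈ closure (L : Set E) := by
  have hdist : Tendsto (fun i ↦ dist (r • ‖x i‖⁻¹ • x i) (⌊r * ‖x i‖⁻¹⌋ • x i)) l (𝓝 0) := by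
    refine squeeze_zero (fun _ ↦ dist_nonneg) (fun i ↦ ?_) (tendsto_norm_zero.comp hx)
    rw [smul_smul]
    exact dist_smul_floor_zsmul_le _ _
  exact mem_closure_of_tendsto (tendsto_of_tendsto_of_dist (hu.const_smul r) hdist)
    (Eventually.of_forall fun i ↦ L.toAddSubgroup.zsmul_mem (hxL i) _)

lemma Submodule.exists_norm_eq_one_smul_mem_closure [ProperSpace E] (L : Submodule ℤ E)
    (hL : ¬DiscreteTopology L) : ∃ u : E, ‖u‖ = 1 ∧ ∀ r : ℝ, r • u ∈ closure (L : Set E) := by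
  choose x hxL hx0 hxε using fun n : ℕ ↦
    L.exists_mem_ne_zero_norm_lt hL (Nat.one_div_pos_of_nat (n := n))
  have hx : Tendsto x atTop (𝓝 0) :=
    tendsto_zero_iff_norm_tendsto_zero.mpr <| squeeze_zero (fun _ ↦ norm_nonneg _)
      (fun n ↦ (hxε n).le) tendsto_one_div_add_atTop_nhds_zero_nat
  have hsphere : ∀ n, ‖x n‖⁻¹ • x n ∈ Metric.sphere (0 : E) 1 := fun n ↦ by
    simp [norm_smul, hx0 n]
  obtain ⟨u, hu, φ, hφ, hφu⟩ := (isCompact_sphere (0 : E) 1).tendsto_subseq hsphere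
  exact ⟨u, by simpa using hu, L.smul_mem_closure_of_tendsto_normalize (fun n ↦ hxL (φ n))
    (hx.comp hφ.tendsto_atTop) hφu⟩

lemma Submodule.not_discreteTopology_span_of_finrank_lt [FiniteDimensional ℝ E] {ι : Type*}
    [Fintype ι] {v : ι → E} (hv : LinearIndependent ℤ v)
    (hlt : Module.finrank ℝ E < Fintype.card ι) :
    ¬DiscreteTopology (Submodule.span ℤ (Set.range v)) := by
  intro hdisc
  have hrank := Real.finrank_eq_int_finrank_of_discrete hdisc
  rw [Set.finrank, Set.finrank, finrank_span_eq_card hv] at hrank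
  exact hlt.not_ge (hrank ▸ Submodule.finrank_le _)

end NonDiscreteSubgroup

namespace Complex

lemma exp_zsmul_log_add_zsmul_log_add_zsmul_two_pi_I {lam lam' : ℂ} (hlam0 : lam ≠ 0)
    (hlam'0 : lam' ≠ 0) (m n k : ℤ) :
    exp (m • log lam + n • log lam' + k • (2 * Real.pi * I)) = lam ^ m * lam' ^ n := by
  simp only [zsmul_eq_mul, exp_add, exp_int_mul, exp_log hlam0, exp_log hlam'0, exp_two_pi_mul_I,
    one_zpow, mul_one]

lemma linearIndependent_log_log_two_pi_I {lam lam' : ℂ} (hlam0 : lam ≠ 0) (hlam'0 : lam' ≠ 0)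
    (h : ∀ m n : ℤ, lam ^ m * lam' ^ n = 1 → m = 0 ∧ n = 0) :
    LinearIndependent ℤ ![log lam, log lam', 2 * Real.pi * I] := by
  rw [Fintype.linearIndependent_iff]
  intro g hg
  rw [Fin.sum_univ_three] at hg
  obtain ⟨hg0, hg1⟩ := h (g 0) (g 1) <| by
    rw [← exp_zsmul_log_add_zsmul_log_add_zsmul_two_pi_I hlam0 hlam'0 _ _ (g 2)]
    simpa using congrArg exp hg
  have hg2 : g 2 = 0 := by
    simpa [hg0, hg1, zsmul_eq_mul, Real.pi_ne_zero, I_ne_zero] using hg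
  intro i
  fin_cases i <;> assumption

lemma exp_mem_of_mem_span_log_log_two_pi_I {lam lam' : ℂ} (hlam0 : lam ≠ 0) (hlam'0 : lam' ≠ 0)
    {z : ℂ} (hz : z ∈ Submodule.span ℤ (Set.range ![log lam, log lam', 2 * Real.pi * I])) :
    ∃ m n : ℤ, exp z = lam ^ m * lam' ^ n := by
  obtain ⟨c, rfl⟩ := (Submodule.mem_span_range_iff_exists_fun ℤ).mp hz
  refine ⟨c 0, c 1, ?_⟩
  simpa [Fin.sum_univ_three] using
    exp_zsmul_log_add_zsmul_log_add_zsmul_two_pi_I hlam0 hlam'0 (c 0) (c 1) (c 2)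

end Complex

theorem stmt_1_general (lam lam' : ℂ) (hlam0 : lam ≠ 0) (hlam'0 : lam' ≠ 0)
    (h : ∀ m n : ℤ, lam ^ m * lam' ^ n = 1 → m = 0 ∧ n = 0) :
    ∃ a : ℂ, a ≠ 0 ∧
      ∀ r : ℝ, Complex.exp (a * r) ∈
        closure {z : ℂ | ∃ m n : ℤ, z = lam ^ m * lam' ^ n} := by
  have hnd := Submodule.not_discreteTopology_span_of_finrank_lt
    (Complex.linearIndependent_log_log_two_pi_I hlam0 hlam'0 h)
    (by simp [Complex.finrank_real_complex])
  obtain ⟨u, hu, hline⟩ := Submodule.exists_norm_eq_one_smul_mem_closure _ hnd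
  refine ⟨u, norm_ne_zero_iff.mp (hu ▸ one_ne_zero), fun r ↦ ?_⟩
  rw [mul_comm, ← Complex.real_smul]
  exact map_mem_closure Complex.continuous_exp (hline r) fun z hz ↦
    Complex.exp_mem_of_mem_span_log_log_two_pi_I hlam0 hlam'0 hz

/-- If `λ, λ'` are nonzero complex numbers with `|λ| > 1` and
`λ^m (λ')^n ≠ 1` for every `(m,n) ≠ (0,0)`, then the closure of the multiplicative
group generated by `λ` and `λ'` contains a one-real-parameter subgroup
`{exp(a r) : r ∈ ℝ}` with `a ≠ 0`. -/
theorem stmt_1 (lam lam' : ℂ) (hlam0 : lam ≠ 0) (hlam'0 : lam' ≠ 0)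
    (hlam : 1 < ‖lam‖)
    (h : ∀ m n : ℤ, lam ^ m * lam' ^ n = 1 → m = 0 ∧ n = 0) :
    ∃ a : ℂ, a ≠ 0 ∧
      ∀ r : ℝ, Complex.exp (a * r) ∈
        closure {z : ℂ | ∃ m n : ℤ, z = lam ^ m * lam' ^ n} :=
  stmt_1_general lam lam' hlam0 hlam'0 h
end

section
/- Let f and g be holomorphic germs at 0 with f(0) = g(0) = 0, f'(0) = g'(0) = 1, written f(z) = z + α z^{p+1} + O(z^{p+2}) and g(z) = z + β z^{p+1} + O(z^{p+2}) with α ≠ 0 and β/α = m/n a rational number (in lowest terms, n > 0). Then either g^n = f^m as germs, or the germ h := g^n ∘ f^{-m} has the form h(z) = z + β' z^{q'+1} + O(z^{q'+2}) with β' ≠ 0 and q' > p. -/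
open Filter Topology Asymptotics

/-- Iterate of a germ with integer exponent: nonnegative powers iterate `f`,
negative powers iterate the inverse `finv`. -/
noncomputable def iterZ (f finv : ℂ → ℂ) (k : ℤ) : ℂ → ℂ :=
  if 0 ≤ k then f^[k.toNat] else finv^[(-k).toNat]

/-!
`HasLeadingTerm φ a p` says `φ z = z + a z^(p+1) + O(z^(p+2))`. For `p ≥ 1` the cross terms of a
composition are `O(z^(2p+1))`, so leading coefficients add under composition and iteration and
change sign under inversion. Thus `g^[n]` has coefficient `n β` and `f^[-m]` has `-m α`, and
`β n = α m` gives `h z = z + O(z^(p+2))` for `h = g^[n] ∘ f^[-m]`. Being analytic, `h - id`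
either vanishes near `0`, and then `g^[n] = f^[m]` as germs, or has a nonzero leading term
`β' z^(q'+1)` of finite order `q' + 1 ≥ p + 2`.
-/

section LeadingTerm

variable {𝕜 : Type*} [NormedField 𝕜]

def HasLeadingTerm (φ : 𝕜 → 𝕜) (a : 𝕜) (p : ℕ) : Prop :=
  (fun z => φ z - z - a * z ^ (p + 1)) =O[𝓝 0] fun z => z ^ (p + 2)

theorem isBigO_pow_pow_of_le {i j : ℕ} (h : j ≤ i) :
    (fun z : 𝕜 => z ^ i) =O[𝓝 0] fun z => z ^ j := by
  rcases h.eq_or_lt with rfl | hlt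
  · exact isBigO_refl _ _
  · exact (isLittleO_pow_pow hlt).isBigO

theorem isBigO_pow_sub_pow {ψ : 𝕜 → 𝕜} {q : ℕ} (hψ : ψ =O[𝓝 0] fun z => z)
    (hsub : (fun z => ψ z - z) =O[𝓝 0] fun z => z ^ q) (k : ℕ) :
    (fun z => ψ z ^ (k + 1) - z ^ (k + 1)) =O[𝓝 0] fun z => z ^ (k + q) := by
  have hsum : (fun z => ∑ i ∈ Finset.range (k + 1), ψ z ^ i * z ^ (k - i))
      =O[𝓝 0] fun z => z ^ k := by
    refine IsBigO.fun_sum fun i hi => ?_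
    have hik : i + (k - i) = k := Nat.add_sub_cancel' (Finset.mem_range_succ_iff.mp hi)
    exact ((hψ.pow i).mul (isBigO_refl _ _)).congr_right fun z => by rw [← pow_add, hik]
  refine (hsum.mul hsub).congr (fun z => ?_) fun z => (pow_add z k q).symm
  simpa using geom_sum₂_mul (ψ z) z (k + 1)

namespace HasLeadingTerm

variable {φ ψ : 𝕜 → 𝕜} {a b : 𝕜} {p : ℕ}

theorem sub_id_isBigO (hφ : HasLeadingTerm φ a p) :
    (fun z => φ z - z) =O[𝓝 0] fun z => z ^ (p + 1) :=
  ((hφ.trans (isBigO_pow_pow_of_le (by omega))).add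
    ((isBigO_refl _ _).const_mul_left a)).congr_left fun z => by ring

theorem isBigO_id (hφ : HasLeadingTerm φ a p) : φ =O[𝓝 0] fun z => z := by
  have hpow : (fun z : 𝕜 => z ^ (p + 1)) =O[𝓝 0] fun z => z :=
    (isBigO_pow_pow_of_le (j := 1) (by omega)).congr_right fun z => pow_one z
  exact ((hφ.sub_id_isBigO.trans hpow).add (isBigO_refl _ _)).congr_left fun z => by ring

theorem tendsto (hφ : HasLeadingTerm φ a p) : Tendsto φ (𝓝 0) (𝓝 0) :=
  hφ.isBigO_id.trans_tendsto tendsto_id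

theorem comp (hp : 1 ≤ p) (hφ : HasLeadingTerm φ a p) (hψ : HasLeadingTerm ψ b p) :
    HasLeadingTerm (φ ∘ ψ) (a + b) p := by
  have hφψ : (fun z => φ (ψ z) - ψ z - a * ψ z ^ (p + 1)) =O[𝓝 0] fun z => z ^ (p + 2) :=
    (hφ.comp_tendsto hψ.tendsto).trans (hψ.isBigO_id.pow (p + 2))
  have hcross : (fun z => ψ z ^ (p + 1) - z ^ (p + 1)) =O[𝓝 0] fun z => z ^ (p + 2) :=
    (isBigO_pow_sub_pow hψ.isBigO_id hψ.sub_id_isBigO p).trans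
      (isBigO_pow_pow_of_le (by omega))
  exact ((hφψ.add hψ).add (hcross.const_mul_left a)).congr_left fun z => by
    simp only [Function.comp_apply]; ring

theorem iterate (hp : 1 ≤ p) (hφ : HasLeadingTerm φ a p) (k : ℕ) :
    HasLeadingTerm φ^[k] (k * a) p := by
  induction k with
  | zero => simpa [HasLeadingTerm] using isBigO_zero _ _
  | succ k ih =>
    rw [Function.iterate_succ', show ((k + 1 : ℕ) : 𝕜) * a = a + k * a by push_cast; ring]
    exact hφ.comp hp ih

theorem rightInverse (hp : 1 ≤ p) (hφ : HasLeadingTerm φ a p)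
    (hψ : ψ =O[𝓝 0] fun z => z) (hinv : ∀ᶠ z in 𝓝 0, φ (ψ z) = z) :
    HasLeadingTerm ψ (-a) p := by
  have hφψ : (fun z => z - ψ z - a * ψ z ^ (p + 1)) =O[𝓝 0] fun z => z ^ (p + 2) :=
    ((hφ.comp_tendsto (hψ.trans_tendsto tendsto_id)).trans (hψ.pow (p + 2))).congr'
      (hinv.mono fun z hz => by simp only [Function.comp_apply, hz]) EventuallyEq.rfl
  have hsub : (fun z => ψ z - z) =O[𝓝 0] fun z => z ^ (p + 1) :=
    ((hφψ.trans (isBigO_pow_pow_of_le (by omega))).add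
      ((hψ.pow (p + 1)).const_mul_left a)).neg_left.congr_left fun z => by ring
  have hcross : (fun z => ψ z ^ (p + 1) - z ^ (p + 1)) =O[𝓝 0] fun z => z ^ (p + 2) :=
    (isBigO_pow_sub_pow hψ hsub p).trans (isBigO_pow_pow_of_le (by omega))
  exact ((hφψ.add (hcross.const_mul_left a)).neg_left).congr_left fun z => by ring

end HasLeadingTerm

end LeadingTerm

theorem eventually_iterate_apply_iterate {α : Type*} {l : Filter α} {φ ψ : α → α}
    (hφ : Tendsto φ l l) (hinv : ∀ᶠ z in l, ψ (φ z) = z) (k : ℕ) :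
    ∀ᶠ z in l, ψ^[k] (φ^[k] z) = z := by
  induction k with
  | zero => exact Eventually.of_forall fun z => rfl
  | succ k ih =>
    filter_upwards [ih, (hφ.iterate k).eventually hinv] with z hk hstep
    rw [Function.iterate_succ_apply, Function.iterate_succ_apply', hstep, hk]

section Analytic

variable {𝕜 : Type*} [NontriviallyNormedField 𝕜]

theorem not_isBigO_pow_pow_succ (N : ℕ) :
    ¬(fun z : 𝕜 => z ^ N) =O[𝓝 0] fun z => z ^ (N + 1) := fun h =>
  isLittleO_irrefl
    (((eventually_mem_nhdsWithin (s := {0}ᶜ) (a := (0 : 𝕜))).frequently.filter_mono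
      nhdsWithin_le_nhds).mono fun _ hz => pow_ne_zero N hz)
    (h.trans_isLittleO (isLittleO_pow_pow N.lt_succ_self))

theorem AnalyticAt.iterate {E : Type*} [NormedAddCommGroup E] [NormedSpace 𝕜 E] {f : E → E}
    {x : E} (hf : AnalyticAt 𝕜 f x) (hx : f x = x) (k : ℕ) : AnalyticAt 𝕜 f^[k] x := by
  induction k with
  | zero => exact analyticAt_id
  | succ k ih =>
    rw [Function.iterate_succ']
    exact ((Function.iterate_fixed hx k).symm ▸ hf).comp ih

theorem AnalyticAt.eventually_eq_zero_or_exists_isBigO_sub_pow {u : 𝕜 → 𝕜} {k : ℕ}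
    (hu : AnalyticAt 𝕜 u 0) (hk : u =O[𝓝 0] fun z => z ^ k) :
    (∀ᶠ z in 𝓝 0, u z = 0) ∨
      ∃ c ≠ 0, ∃ N, k ≤ N ∧ (fun z => u z - c * z ^ N) =O[𝓝 0] fun z => z ^ (N + 1) := by
  by_cases hzero : ∀ᶠ z in 𝓝 0, u z = 0
  · exact Or.inl hzero
  obtain ⟨w, hw, hw0, huw⟩ :=
    hu.analyticOrderAt_ne_top.mp (mt analyticOrderAt_eq_top.mp hzero)
  set N := analyticOrderNatAt u 0
  have hlead : (fun z => u z - w 0 * z ^ N) =O[𝓝 0] fun z => z ^ (N + 1) := by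
    have hw' : (fun z => w z - w 0) =O[𝓝 0] fun z => z := by
      simpa using hw.differentiableAt.isBigO_sub
    refine (((isBigO_refl (fun z => z ^ N) _).mul hw').congr' ?_ ?_)
    · filter_upwards [huw] with z hz
      simp only [hz, sub_zero, smul_eq_mul]
      ring
    · exact Eventually.of_forall fun z => (pow_succ z N).symm
  refine Or.inr ⟨w 0, hw0, N, not_lt.mp fun hNk => not_isBigO_pow_pow_succ (𝕜 := 𝕜) N ?_, hlead⟩
  refine (((hk.trans (isBigO_pow_pow_of_le hNk)).sub hlead).const_mul_left (w 0)⁻¹).congr_left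
    fun z => ?_
  field_simp
  ring

theorem AnalyticAt.eventuallyEq_id_or_hasLeadingTerm {h : 𝕜 → 𝕜} {p : ℕ}
    (hh : AnalyticAt 𝕜 h 0) (hid : (fun z => h z - z) =O[𝓝 0] fun z => z ^ (p + 2)) :
    h =ᶠ[𝓝 0] id ∨ ∃ (c : 𝕜) (q : ℕ), c ≠ 0 ∧ p < q ∧ HasLeadingTerm h c q := by
  rcases (hh.sub analyticAt_id).eventually_eq_zero_or_exists_isBigO_sub_pow hid with
    hzero | ⟨c, hc, N, hN, hlead⟩
  · exact Or.inl (hzero.mono fun z hz => sub_eq_zero.mp hz)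
  · obtain ⟨q, rfl⟩ : ∃ q, N = q + 1 := Nat.exists_eq_add_of_le' (by omega)
    exact Or.inr ⟨c, q, hc, by omega, hlead⟩

theorem eventuallyEq_or_hasLeadingTerm_comp {G F Finv : 𝕜 → 𝕜} {b c : 𝕜} {p : ℕ} (hp : 1 ≤ p)
    (hG : AnalyticAt 𝕜 G 0) (hFinv : AnalyticAt 𝕜 Finv 0) (hFinv0 : Finv 0 = 0)
    (hF : Tendsto F (𝓝 0) (𝓝 0)) (hinv : ∀ᶠ z in 𝓝 0, Finv (F z) = z)
    (hGb : HasLeadingTerm G b p) (hFinvc : HasLeadingTerm Finv c p) (hbc : b + c = 0) :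
    G =ᶠ[𝓝 0] F ∨ ∃ (β' : 𝕜) (q' : ℕ), β' ≠ 0 ∧ p < q' ∧ HasLeadingTerm (G ∘ Finv) β' q' := by
  have hcomp : AnalyticAt 𝕜 (G ∘ Finv) 0 := (hFinv0.symm ▸ hG).comp hFinv
  have hid : (fun z => (G ∘ Finv) z - z) =O[𝓝 0] fun z => z ^ (p + 2) :=
    (hGb.comp hp hFinvc).congr_left fun z => by rw [hbc]; ring
  refine (hcomp.eventuallyEq_id_or_hasLeadingTerm hid).imp_left fun hGF => ?_
  filter_upwards [hF.eventually hGF, hinv] with z hz hzinv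
  simpa [hzinv] using hz

end Analytic

theorem iterZ_natCast (f finv : ℂ → ℂ) (j : ℕ) : iterZ f finv j = f^[j] := by
  simp [iterZ]

theorem iterZ_neg_natCast (f finv : ℂ → ℂ) (j : ℕ) : iterZ f finv (-j) = finv^[j] := by
  rcases j.eq_zero_or_pos with rfl | hj
  · simp [iterZ]
  · simp [iterZ, hj.ne']

theorem stmt_2_general (f g finv : ℂ → ℂ) (α β : ℂ) (p : ℕ) (hp : 1 ≤ p)
    (m : ℤ) (n : ℕ)
    (hf : AnalyticAt ℂ f 0) (hg : AnalyticAt ℂ g 0) (hfinv : AnalyticAt ℂ finv 0)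
    (hf0 : f 0 = 0) (hg0 : g 0 = 0) (hfinv0 : finv 0 = 0)
    (hinv : ∀ᶠ z in 𝓝 (0 : ℂ), finv (f z) = z ∧ f (finv z) = z)
    (hratio : β * n = α * m)
    (hfexp : (fun z => f z - z - α * z ^ (p + 1)) =O[𝓝 0] fun z => z ^ (p + 2))
    (hgexp : (fun z => g z - z - β * z ^ (p + 1)) =O[𝓝 0] fun z => z ^ (p + 2)) :
    (g^[n] =ᶠ[𝓝 (0 : ℂ)] iterZ f finv m) ∨
    ∃ (β' : ℂ) (q' : ℕ), β' ≠ 0 ∧ p < q' ∧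
      (fun z => g^[n] (iterZ f finv (-m) z) - z - β' * z ^ (q' + 1))
        =O[𝓝 0] fun z => z ^ (q' + 2) := by
  have hfT : Tendsto f (𝓝 0) (𝓝 0) := by simpa only [hf0] using hf.continuousAt.tendsto
  have hfinvT : Tendsto finv (𝓝 0) (𝓝 0) := by
    simpa only [hfinv0] using hfinv.continuousAt.tendsto
  have hfinvexp : HasLeadingTerm finv (-α) p := by
    refine HasLeadingTerm.rightInverse hp hfexp ?_ (hinv.mono fun z hz => hz.2)
    simpa [hfinv0] using hfinv.differentiableAt.isBigO_sub
  have hgn : HasLeadingTerm g^[n] (n * β) p := HasLeadingTerm.iterate hp hgexp n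
  obtain ⟨j, rfl | rfl⟩ := Int.eq_nat_or_neg m
  · rw [iterZ_natCast, iterZ_neg_natCast]
    refine eventuallyEq_or_hasLeadingTerm_comp hp (hg.iterate hg0 n) (hfinv.iterate hfinv0 j)
      (Function.iterate_fixed hfinv0 j) (hfT.iterate j)
      (eventually_iterate_apply_iterate hfT (hinv.mono fun z hz => hz.1) j) hgn
      (hfinvexp.iterate hp j) ?_
    push_cast at hratio
    linear_combination hratio
  · rw [neg_neg, iterZ_natCast, iterZ_neg_natCast]
    refine eventuallyEq_or_hasLeadingTerm_comp hp (hg.iterate hg0 n) (hf.iterate hf0 j)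
      (Function.iterate_fixed hf0 j) (hfinvT.iterate j)
      (eventually_iterate_apply_iterate hfinvT (hinv.mono fun z hz => hz.2) j) hgn
      (HasLeadingTerm.iterate hp hfexp j) ?_
    push_cast at hratio
    linear_combination hratio

/-- Let `f, g` be holomorphic germs fixing `0`, tangent to the identity,
`f z = z + α z^(p+1) + O(z^(p+2))`, `g z = z + β z^(p+1) + O(z^(p+2))`, `α ≠ 0`,
`β/α = m/n` rational with `n > 0`. Then either `g^n = f^m` as germs, or
`h := g^n ∘ f^(-m)` satisfies `h z = z + β' z^(q'+1) + O(z^(q'+2))` with `β' ≠ 0`,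
`q' > p`. -/
theorem stmt_2 (f g finv : ℂ → ℂ) (α β : ℂ) (p : ℕ) (hp : 1 ≤ p)
    (m : ℤ) (n : ℕ) (hn : 0 < n)
    (hf : AnalyticAt ℂ f 0) (hg : AnalyticAt ℂ g 0) (hfinv : AnalyticAt ℂ finv 0)
    (hf0 : f 0 = 0) (hg0 : g 0 = 0) (hfinv0 : finv 0 = 0)
    (hinv : ∀ᶠ z in 𝓝 (0 : ℂ), finv (f z) = z ∧ f (finv z) = z)
    (hα : α ≠ 0) (hβ : β ≠ 0)
    (hratio : β * n = α * m)
    (hfexp : (fun z => f z - z - α * z ^ (p + 1)) =O[𝓝 0] fun z => z ^ (p + 2))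
    (hgexp : (fun z => g z - z - β * z ^ (p + 1)) =O[𝓝 0] fun z => z ^ (p + 2)) :
    (g^[n] =ᶠ[𝓝 (0 : ℂ)] iterZ f finv m) ∨
    ∃ (β' : ℂ) (q' : ℕ), β' ≠ 0 ∧ p < q' ∧
      (fun z => g^[n] (iterZ f finv (-m) z) - z - β' * z ^ (q' + 1))
        =O[𝓝 0] fun z => z ^ (q' + 2) :=
  stmt_2_general f g finv α β p hp m n hf hg hfinv hf0 hg0 hfinv0 hinv hratio hfexp hgexp
end

section
/- For every a > 0, the petals Π_k(a) = {r e^{iθ} : 0 < r^p < a(1 + cos(pθ)), |2kπ/p - θ| < π/p} for 0 ≤ k ≤ p-1 together with the petals Π'_k(a) = {r e^{iθ} : 0 < r^p < a(1 - cos(pθ)), |(2k+1)π/p - θ| < π/p} for 0 ≤ k ≤ p-1 cover a punctured neighborhood of 0 in ℂ. -/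
/-- The petal `Π_k(a) = {r e^{iθ} : 0 < r^p < a(1 + cos(pθ)), |2kπ/p - θ| < π/p}`. -/
def petal (p : ℕ) (k : ℤ) (a : ℝ) : Set ℂ :=
  {z | ∃ r θ : ℝ, 0 < r ∧ z = (r : ℂ) * Complex.exp (θ * Complex.I) ∧
    r ^ p < a * (1 + Real.cos (p * θ)) ∧ |2 * k * Real.pi / p - θ| < Real.pi / p}

/-- The petal `Π'_k(a) = {r e^{iθ} : 0 < r^p < a(1 - cos(pθ)), |(2k+1)π/p - θ| < π/p}`. -/
def petal' (p : ℕ) (k : ℤ) (a : ℝ) : Set ℂ :=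
  {z | ∃ r θ : ℝ, 0 < r ∧ z = (r : ℂ) * Complex.exp (θ * Complex.I) ∧
    r ^ p < a * (1 - Real.cos (p * θ)) ∧ |(2 * k + 1) * Real.pi / p - θ| < Real.pi / p}

/-!
For `0 < ‖z‖ < min a 1` we have `‖z‖ ^ p < a`, so the radial condition holds in `Π_k(a)` when
`cos (p θ) ≥ 0` and in `Π'_k(a)` when `cos (p θ) < 0`. Rounding `p θ / 2π` (resp. `(p θ - π) / 2π`)
puts `p θ` within distance `π` of `2mπ` (resp. `(2m + 1)π`); the distance is not exactly `π`, since
then `cos (p θ)` would be `-1` (resp. `1`). Finally rotating `θ` by `2π ⌊m / p⌋` reduces the petal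
index `m` modulo `p`.
-/

open Real

lemma exists_int_abs_sub_int_mul_two_pi_lt {x : ℝ} (hx : -1 < cos x) :
    ∃ m : ℤ, |x - m * (2 * π)| < π := by
  refine ⟨round (x / (2 * π)), lt_of_le_of_ne ?_ fun h ↦ ?_⟩
  · have hround := abs_sub_round (x / (2 * π))
    calc |x - round (x / (2 * π)) * (2 * π)|
        = |x / (2 * π) - round (x / (2 * π))| * (2 * π) := by
          rw [← abs_of_pos two_pi_pos, ← abs_mul, abs_of_pos two_pi_pos]
          field_simp
      _ ≤ 1 / 2 * (2 * π) := by gcongr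
      _ = π := by ring
  · have := congrArg cos h
    rw [cos_abs, cos_sub_int_mul_two_pi, cos_pi] at this
    linarith

lemma abs_div_sub_lt_pi_div {p c θ : ℝ} (hp : 0 < p) (h : |p * θ - c| < π) :
    |c / p - θ| < π / p := by
  rw [show c / p - θ = -(p * θ - c) / p by field_simp; ring, abs_div, abs_neg, abs_of_pos hp]
  exact div_lt_div_of_pos_right h hp

lemma exists_reduced_petal_index {p : ℕ} (hp : 0 < p) (θ : ℝ) (m : ℤ) :
    ∃ k : ℤ, ∃ θ' : ℝ, 0 ≤ k ∧ k ≤ (p : ℤ) - 1 ∧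
      Complex.exp (θ' * Complex.I) = Complex.exp (θ * Complex.I) ∧
      cos (p * θ') = cos (p * θ) ∧ p * θ' - 2 * k * π = p * θ - 2 * m * π := by
  have hm : (m : ℝ) = p * (m / p : ℤ) + (m % p : ℤ) := by
    exact_mod_cast (Int.mul_ediv_add_emod m p).symm
  refine ⟨m % p, θ - (m / p : ℤ) * (2 * π), Int.emod_nonneg m (by positivity), ?_, ?_, ?_, ?_⟩
  · have := Int.emod_lt_of_pos m (by exact_mod_cast hp : (0 : ℤ) < p)
    omega
  · rw [show ((θ - (m / p : ℤ) * (2 * π) : ℝ) : ℂ) * Complex.I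
        = θ * Complex.I - (m / p : ℤ) * (2 * π * Complex.I) by push_cast; ring]
    exact Complex.exp_periodic.sub_int_mul_eq _
  · rw [show (p : ℝ) * (θ - (m / p : ℤ) * (2 * π)) = p * θ - ((p * (m / p) : ℤ) : ℝ) * (2 * π) by
      push_cast; ring, cos_sub_int_mul_two_pi]
  · rw [hm]; ring

lemma exists_mem_petal {p : ℕ} (hp : 0 < p) {a r θ : ℝ} (hr : 0 < r)
    (hrθ : r ^ p < a * (1 + cos (p * θ))) (hθ : -1 < cos (p * θ)) :
    ∃ k : ℤ, 0 ≤ k ∧ k ≤ (p : ℤ) - 1 ∧ (r : ℂ) * Complex.exp (θ * Complex.I) ∈ petal p k a := by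
  obtain ⟨m, hm⟩ := exists_int_abs_sub_int_mul_two_pi_lt hθ
  obtain ⟨k, θ', hk0, hkp, hexp, hcos, hshift⟩ := exists_reduced_petal_index hp θ m
  refine ⟨k, hk0, hkp, r, θ', hr, by rw [hexp], by rwa [hcos], ?_⟩
  refine abs_div_sub_lt_pi_div (by exact_mod_cast hp) ?_
  rwa [hshift, show 2 * (m : ℝ) * π = m * (2 * π) by ring]

lemma exists_mem_petal' {p : ℕ} (hp : 0 < p) {a r θ : ℝ} (hr : 0 < r)
    (hrθ : r ^ p < a * (1 - cos (p * θ))) (hθ : cos (p * θ) < 1) :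
    ∃ k : ℤ, 0 ≤ k ∧ k ≤ (p : ℤ) - 1 ∧ (r : ℂ) * Complex.exp (θ * Complex.I) ∈ petal' p k a := by
  obtain ⟨m, hm⟩ := exists_int_abs_sub_int_mul_two_pi_lt (x := p * θ - π) (by rw [cos_sub_pi]; linarith)
  obtain ⟨k, θ', hk0, hkp, hexp, hcos, hshift⟩ := exists_reduced_petal_index hp θ m
  refine ⟨k, hk0, hkp, r, θ', hr, by rw [hexp], by rwa [hcos], ?_⟩
  refine abs_div_sub_lt_pi_div (by exact_mod_cast hp) ?_
  rwa [show p * θ' - (2 * k + 1) * π = p * θ' - 2 * k * π - π by ring, hshift,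
    show p * θ - 2 * m * π - π = p * θ - π - m * (2 * π) by ring]

/-- For every `a > 0`, the petals `Π_k(a)` and `Π'_k(a)`,
`0 ≤ k ≤ p - 1`, cover a punctured neighborhood of `0`. -/
theorem stmt_10 (p : ℕ) (hp : 1 ≤ p) (a : ℝ) (ha : 0 < a) :
    ∃ r : ℝ, 0 < r ∧ ∀ z : ℂ, z ≠ 0 → ‖z‖ < r →
      (∃ k : ℤ, 0 ≤ k ∧ k ≤ (p : ℤ) - 1 ∧ z ∈ petal p k a) ∨
      (∃ k : ℤ, 0 ≤ k ∧ k ≤ (p : ℤ) - 1 ∧ z ∈ petal' p k a) := by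
  refine ⟨min a 1, lt_min ha one_pos, fun z hz hzr ↦ ?_⟩
  have hnorm : 0 < ‖z‖ := norm_pos_iff.mpr hz
  have hpow : ‖z‖ ^ p < a :=
    (pow_le_of_le_one hnorm.le (hzr.trans_le (min_le_right _ _)).le (by omega)).trans_lt
      (hzr.trans_le (min_le_left _ _))
  rw [← Complex.norm_mul_exp_arg_mul_I z]
  rcases le_or_gt 0 (cos (p * z.arg)) with hcos | hcos
  · exact .inl <| exists_mem_petal hp hnorm (by nlinarith) (by linarith)
  · exact .inr <| exists_mem_petal' hp hnorm (by nlinarith) (by linarith)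
end

section
/- Let h(z) = α h₀(z^p) where h₀ is a rational function, p ≥ 2, and let f(z) := h₀(z^p), g(z) := α h₀(z^p) where α ≠ 1 is a p-th root of unity. Then f ∘ g = f ∘ f (i.e. f(g(z)) = f(f(z)) for all z), and consequently the Julia sets of f and g coincide: J_f = J_g. -/
open Filter Topology

/-- The Fatou set: the maximal open set where the iterates are equicontinuous. -/
def fatouSet (f : ℂ → ℂ) : Set ℂ :=
  {z | ∃ U ∈ 𝓝 z, EquicontinuousOn (fun n : ℕ => f^[n]) U}

/-- The Julia set, complement of the Fatou set. -/
def juliaSet (f : ℂ → ℂ) : Set ℂ := (fatouSet f)ᶜ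

lemma aux_equi {f g : ℂ → ℂ} {α : ℂ} (hm : ‖α‖ = 1)
    (hit : ∀ n : ℕ, ∀ z, g^[n + 1] z = α * f^[n + 1] z)
    {U : Set ℂ} (hU : EquicontinuousOn (fun n : ℕ => f^[n]) U) :
    EquicontinuousOn (fun n : ℕ => g^[n]) U := by
  intro x hx
  have hiso : Isometry (fun z : ℂ => α * z) :=
    Isometry.of_dist_eq (fun a b => by
      simp [dist_eq_norm, ← mul_sub, norm_mul, hm])
  have h1 : EquicontinuousWithinAt (fun n : ℕ => fun z => α * f^[n + 1] z) U x := by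
    have := (hU x hx).comp (fun n : ℕ => n + 1)
    exact (hiso.isUniformInducing.equicontinuousWithinAt_iff).mp this
  intro V hV
  have h2 : ∀ᶠ y in 𝓝[U] x, (x, y) ∈ V :=
    nhdsWithin_le_nhds ((UniformSpace.ball_mem_nhds x hV))
  filter_upwards [h1 V hV, h2] with y hy hxy n
  cases n with
  | zero => simpa using hxy
  | succ n => simpa [hit n x, hit n y] using hy n

/-- Example: Let `h₀` be rational, `p ≥ 2`, `α ≠ 1` a `p`-th root of
unity, `f z = h₀ (z^p)` and `g z = α · h₀ (z^p)`. Then `f ∘ g = f ∘ f`, and the Julia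
sets of `f` and `g` coincide. -/
theorem stmt_13 (h₀ : ℂ → ℂ) (P Q : Polynomial ℂ) (hQ : Q ≠ 0)
    (hrat : ∀ z, h₀ z = P.eval z / Q.eval z)
    (p : ℕ) (hp : 2 ≤ p)
    (hdeg : 2 ≤ max P.natDegree Q.natDegree * p)
    (α : ℂ) (hα : α ^ p = 1) (hα1 : α ≠ 1)
    (f g : ℂ → ℂ) (hf : ∀ z, f z = h₀ (z ^ p)) (hg : ∀ z, g z = α * h₀ (z ^ p)) :
    (∀ z, f (g z) = f (f z)) ∧ juliaSet f = juliaSet g := by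
  have hfg : ∀ z, f (g z) = f (f z) := by
    intro z
    rw [hf, hf, hg, hf, mul_pow, hα, one_mul]
  have hgf : ∀ z, g z = α * f z := fun z => by rw [hg, hf]
  have hit : ∀ n : ℕ, ∀ z, g^[n + 1] z = α * f^[n + 1] z := by
    intro n
    induction n with
    | zero => intro z; simpa using hgf z
    | succ n ih =>
      intro z
      rw [Function.iterate_succ_apply, Function.iterate_succ_apply]
      have hz : g (g z) = g (f z) := by rw [hgf (g z), hgf (f z), hfg z]
      rw [hz, ← Function.iterate_succ_apply, ih, ← Function.iterate_succ_apply]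
  have hα0 : α ≠ 0 := by
    intro h; rw [h, zero_pow (show p ≠ 0 by omega)] at hα
    exact zero_ne_one hα
  have hm : ‖α‖ = 1 := by
    have : ‖α‖ ^ p = 1 := by rw [← norm_pow, hα, norm_one]
    rw [← one_pow p] at this
    exact (pow_left_inj₀ (norm_nonneg α) zero_le_one (show p ≠ 0 by omega)).mp this
  have hit' : ∀ n : ℕ, ∀ z, f^[n + 1] z = α⁻¹ * g^[n + 1] z := by
    intro n z
    rw [hit n z, ← mul_assoc, inv_mul_cancel₀ hα0, one_mul]
  have hm' : ‖α⁻¹‖ = 1 := by rw [norm_inv, hm, inv_one]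
  refine ⟨hfg, ?_⟩
  unfold juliaSet fatouSet
  have : ∀ x : ℂ, (∃ U ∈ 𝓝 x, EquicontinuousOn (fun n : ℕ => f^[n]) U) ↔
      (∃ U ∈ 𝓝 x, EquicontinuousOn (fun n : ℕ => g^[n]) U) := by
    intro x
    constructor
    · rintro ⟨U, hU, hE⟩; exact ⟨U, hU, aux_equi hm hit hE⟩
    · rintro ⟨U, hU, hE⟩; exact ⟨U, hU, aux_equi hm' hit' hE⟩
  ext x
  simp only [Set.mem_compl_iff, Set.mem_setOf_eq, this]
end
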